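/- Let k, s be nonnegative integers with k + s ≥ 3, and let (m_α)_{α ∈ A} be the multiplicity function of a finite multiset built as the union of a multiset α-part of size s and a β-part of size k. Suppose every element of the combined multiset has multiplicity at least 2 and some element has multiplicity at least 3. If I⋆ denotes the number of distinct elements appearing in the β-part but not in the α-part, and I⁺₁ denotes the number of elements of the α-part with α-multiplicity exactly 1, plus 1 if no element has α-multiplicity exceeding 2, then k ≥ 2·I⋆ + I⁺₁. -/
import Mathlib


open Finset

/-- Combinatorial counting bound of Lemma 2.8 / eq. (2.17): if multiplicities `c + n`
(with `Σ c = s`, `Σ n = k`, `k + s ≥ 3`) are all `≥ 2` when nonzero and some one is `≥ 3`,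
then `k ≥ 2 I⋆ + I⁺₁`, where `I⋆ = #{a : c a = 0, n a ≥ 1}` and
`I⁺₁ = #{a : c a = 1} + 1_{∀ a, c a ≤ 2}`. -/
theorem stmt19 {A : Type*} [Fintype A] [DecidableEq A]
    (c n : A → ℕ) (s k : ℕ)
    (hs : ∑ a, c a = s) (hk : ∑ a, n a = k) (hks : 3 ≤ k + s)
    (h2 : ∀ a, 1 ≤ c a + n a → 2 ≤ c a + n a)
    (h3 : ∃ a, 3 ≤ c a + n a) :
    2 * (univ.filter fun a => c a = 0 ∧ 1 ≤ n a).card +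
        ((univ.filter fun a => c a = 1).card + (if ∀ a, c a ≤ 2 then 1 else 0))
      ≤ k := by
  classical
  subst hk
  set S0 := univ.filter fun a => c a = 0 ∧ 1 ≤ n a with hS0
  set S1 := univ.filter fun a => c a = 1 with hS1
  have hdisj : Disjoint S0 S1 := by
    rw [Finset.disjoint_left]
    intro a ha ha'
    simp [hS0, hS1] at ha ha'
    omega
  have h0 : ∀ a ∈ S0, 2 ≤ n a := by
    intro a ha
    simp only [hS0, mem_filter, mem_univ, true_and] at ha
    have := h2 a (by omega)
    omega
  have h1 : ∀ a ∈ S1, 1 ≤ n a := by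
    intro a ha
    simp only [hS1, mem_filter, mem_univ, true_and] at ha
    have := h2 a (by omega)
    omega
  have hsum1 : S1.card ≤ ∑ a ∈ S1, n a := by
    calc S1.card = ∑ _a ∈ S1, 1 := by simp
    _ ≤ _ := Finset.sum_le_sum h1
  have hunion : ∑ a ∈ S0 ∪ S1, n a = ∑ a ∈ S0, n a + ∑ a ∈ S1, n a :=
    Finset.sum_union hdisj
  have hsub : ∑ a ∈ S0 ∪ S1, n a ≤ ∑ a, n a :=
    Finset.sum_le_sum_of_subset (Finset.subset_univ _)
  by_cases hall : ∀ a, c a ≤ 2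
  · rw [if_pos hall]
    obtain ⟨a3, ha3⟩ := h3
    have hca3 := hall a3
    have hn3 : 1 ≤ n a3 := by omega
    by_cases h03 : a3 ∈ S0
    · -- n a3 ≥ 3
      have hc0 : c a3 = 0 := by
        simp only [hS0, mem_filter, mem_univ, true_and] at h03; exact h03.1
      have hn3' : 3 ≤ n a3 := by omega
      have hsum0 : 2 * S0.card + 1 ≤ ∑ a ∈ S0, n a := by
        rw [← Finset.add_sum_erase _ _ h03]
        have he : 2 * (S0.erase a3).card ≤ ∑ a ∈ S0.erase a3, n a := by
          calc 2 * (S0.erase a3).card = ∑ _a ∈ S0.erase a3, 2 := by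
                rw [Finset.sum_const]; ring
          _ ≤ _ := Finset.sum_le_sum fun a ha => h0 a (Finset.mem_of_mem_erase ha)
        have hc : (S0.erase a3).card + 1 = S0.card := Finset.card_erase_add_one h03
        omega
      omega
    · by_cases h13 : a3 ∈ S1
      · have hc1 : c a3 = 1 := by
          simp only [hS1, mem_filter, mem_univ, true_and] at h13; exact h13
        have hn2 : 2 ≤ n a3 := by omega
        have hsum0 : 2 * S0.card ≤ ∑ a ∈ S0, n a := by
          calc 2 * S0.card = ∑ _a ∈ S0, 2 := by rw [Finset.sum_const]; ring
          _ ≤ _ := Finset.sum_le_sum h0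
        have hsum1' : S1.card + 1 ≤ ∑ a ∈ S1, n a := by
          rw [← Finset.add_sum_erase _ _ h13]
          have he : (S1.erase a3).card ≤ ∑ a ∈ S1.erase a3, n a := by
            calc (S1.erase a3).card = ∑ _a ∈ S1.erase a3, 1 := by simp
            _ ≤ _ := Finset.sum_le_sum fun a ha => h1 a (Finset.mem_of_mem_erase ha)
          have hc : (S1.erase a3).card + 1 = S1.card := Finset.card_erase_add_one h13
          omega
        omega
      · have hnotin : a3 ∉ S0 ∪ S1 := by
          simp [h03, h13]
        have hsub' : ∑ a ∈ insert a3 (S0 ∪ S1), n a ≤ ∑ a, n a :=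
          Finset.sum_le_sum_of_subset (Finset.subset_univ _)
        rw [Finset.sum_insert hnotin] at hsub'
        have hsum0 : 2 * S0.card ≤ ∑ a ∈ S0, n a := by
          calc 2 * S0.card = ∑ _a ∈ S0, 2 := by rw [Finset.sum_const]; ring
          _ ≤ _ := Finset.sum_le_sum h0
        omega
  · rw [if_neg hall]
    have hsum0 : 2 * S0.card ≤ ∑ a ∈ S0, n a := by
      calc 2 * S0.card = ∑ _a ∈ S0, 2 := by rw [Finset.sum_const]; ring
      _ ≤ _ := Finset.sum_le_sum h0
    omega
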